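/- arXiv:1001.2613 — 5 statements merged into one kernel-verified Lean document; each statement's English description precedes it below -/
import Mathlib

section
/- Let 1 < p ≤ q and let A be an n×n matrix with all entries in [1/N, 1]. Let z ∈ ℝ^n have strictly positive entries with ‖z‖_q = 1, ‖Az‖_p = 1, and suppose z is a critical point of f, i.e., Σ_k (A_k z)^{p-1} a_{ki} = z_i^{q-1} for every i. Then the Hessian of f at z is negative semidefinite: for every direction ε ∈ ℝ^n, the second derivative of t ↦ f(z + tε) at t = 0 is at most 0. -/
/-!
Along the line `t ↦ z + t • ε` the quotient is `P ^ (1/p) * Q ^ (-1/q)` with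
`P t = ∑ₖ (Az + t Aε)ₖ ^ p` and `Q t = ∑ᵢ (z + t ε)ᵢ ^ q`, both equal to `1` at `t = 0`.
Criticality gives `P'(0) / p = Q'(0) / q = c := ∑ᵢ zᵢ ^ (q-1) εᵢ`, and the second derivative
collapses to `(p - 1) (B_F - B_G) + (q - p) (c² - B_G)` with
`B_F = ∑ₖ (Az)ₖ ^ (p-2) (Aε)ₖ²` and `B_G = ∑ᵢ zᵢ ^ (q-2) εᵢ²`.
Both brackets are `≤ 0` by Cauchy–Schwarz: `c² ≤ (∑ zᵢ ^ q) B_G = B_G`, and row by row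
`(Aε)ₖ² ≤ (Az)ₖ (A (ε²/z))ₖ`, which after summing against `(Az)ₖ ^ (p-1)` and using
criticality once more gives `B_F ≤ B_G`.
-/

open Filter Topology Matrix

/-- The `ℓ_p` norm of a vector in `ℝ^n` for a real exponent `p`. -/
noncomputable def pnorm {n : ℕ} (p : ℝ) (x : Fin n → ℝ) : ℝ :=
  (∑ i, |x i| ^ p) ^ (1 / p)

theorem deriv_deriv_rpow_mul_rpow {u v u' v' : ℝ → ℝ} {a b u'' v'' t₀ : ℝ}
    (hu : ∀ᶠ t in 𝓝 t₀, HasDerivAt u (u' t) t) (hv : ∀ᶠ t in 𝓝 t₀, HasDerivAt v (v' t) t)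
    (hu' : HasDerivAt u' u'' t₀) (hv' : HasDerivAt v' v'' t₀)
    (hu₀ : u t₀ = 1) (hv₀ : v t₀ = 1) :
    deriv (deriv fun t => u t ^ a * v t ^ b) t₀ =
      a * u'' + a * (a - 1) * u' t₀ ^ 2 + 2 * a * b * u' t₀ * v' t₀
        + b * v'' + b * (b - 1) * v' t₀ ^ 2 := by
  have hu_pos : ∀ᶠ t in 𝓝 t₀, 0 < u t :=
    hu.self_of_nhds.continuousAt.eventually_const_lt (by rw [hu₀]; exact one_pos)
  have hv_pos : ∀ᶠ t in 𝓝 t₀, 0 < v t :=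
    hv.self_of_nhds.continuousAt.eventually_const_lt (by rw [hv₀]; exact one_pos)
  have hderiv : deriv (fun t => u t ^ a * v t ^ b) =ᶠ[𝓝 t₀] fun t =>
      u' t * a * u t ^ (a - 1) * v t ^ b + u t ^ a * (v' t * b * v t ^ (b - 1)) := by
    filter_upwards [hu, hv, hu_pos, hv_pos] with t hut hvt hut_pos hvt_pos
    exact ((hut.rpow_const (Or.inl hut_pos.ne')).mul (hvt.rpow_const (Or.inl hvt_pos.ne'))).deriv
  have hu₁ : u t₀ ≠ 0 := by rw [hu₀]; exact one_ne_zero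
  have hv₁ : v t₀ ≠ 0 := by rw [hv₀]; exact one_ne_zero
  have hu_t₀ := hu.self_of_nhds
  have hv_t₀ := hv.self_of_nhds
  rw [hderiv.deriv_eq,
    ((((hu'.mul_const a).fun_mul (hu_t₀.rpow_const (p := a - 1) (Or.inl hu₁))).fun_mul
      (hv_t₀.rpow_const (p := b) (Or.inl hv₁))).fun_add
      ((hu_t₀.rpow_const (p := a) (Or.inl hu₁)).fun_mul
        ((hv'.mul_const b).fun_mul (hv_t₀.rpow_const (p := b - 1) (Or.inl hv₁))))).deriv]
  simp only [hu₀, hv₀, Real.one_rpow]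
  ring

theorem hasDerivAt_sum_mul_rpow_line {ι : Type*} [Fintype ι] (a x v : ι → ℝ) (r t : ℝ)
    (h : ∀ i, x i + t * v i ≠ 0) :
    HasDerivAt (fun s => ∑ i, a i * (x i + s * v i) ^ r)
      (r * ∑ i, a i * v i * (x i + t * v i) ^ (r - 1)) t := by
  have hterm : ∀ i, HasDerivAt (fun s => a i * (x i + s * v i) ^ r)
      (r * (a i * v i * (x i + t * v i) ^ (r - 1))) t := fun i => by
    have hline : HasDerivAt (fun s => x i + s * v i) (v i) t := by
      simpa using ((hasDerivAt_id t).mul_const (v i)).const_add (x i)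
    rw [show r * (a i * v i * (x i + t * v i) ^ (r - 1))
        = a i * (v i * r * (x i + t * v i) ^ (r - 1)) by ring]
    exact (hline.rpow_const (Or.inl (h i))).const_mul (a i)
  rw [Finset.mul_sum]
  exact HasDerivAt.fun_sum fun i _ => hterm i

theorem eventually_forall_pos_add_mul {ι : Type*} [Finite ι] {x : ι → ℝ} (hx : ∀ i, 0 < x i)
    (v : ι → ℝ) : ∀ᶠ t in 𝓝 (0 : ℝ), ∀ i, 0 < x i + t * v i :=
  eventually_all.2 fun i => Tendsto.eventually_const_lt (hx i) <| by
    simpa using ((continuous_id.mul continuous_const).const_add (x i)).tendsto' 0 (x i) (by simp)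

theorem pnorm_of_nonneg {n : ℕ} (p : ℝ) {x : Fin n → ℝ} (hx : ∀ i, 0 ≤ x i) :
    pnorm p x = (∑ i, x i ^ p) ^ (1 / p) := by
  simp only [pnorm, abs_of_nonneg (hx _)]

theorem sum_rpow_eq_one_of_pnorm_eq_one {n : ℕ} {p : ℝ} (hp : p ≠ 0) {x : Fin n → ℝ}
    (hx : ∀ i, 0 ≤ x i) (h : pnorm p x = 1) : ∑ i, x i ^ p = 1 := by
  rw [pnorm_of_nonneg p hx, one_div] at h
  rw [← Real.rpow_inv_rpow (Finset.sum_nonneg fun i _ => Real.rpow_nonneg (hx i) p) hp, h,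
    Real.one_rpow]

theorem iteratedDeriv_two_pnorm_div_pnorm_line {n : ℕ} {p q : ℝ} (hp : p ≠ 0) (hq : q ≠ 0)
    {y z : Fin n → ℝ} (hy : ∀ k, 0 < y k) (hz : ∀ i, 0 < z i)
    (hyp : pnorm p y = 1) (hzq : pnorm q z = 1) (w ε : Fin n → ℝ) :
    iteratedDeriv 2 (fun t : ℝ => pnorm p (y + t • w) / pnorm q (z + t • ε)) 0 =
      (p - 1) * ∑ k, y k ^ (p - 2) * w k ^ 2 - (p - 1) * (∑ k, y k ^ (p - 1) * w k) ^ 2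
        - 2 * (∑ k, y k ^ (p - 1) * w k) * (∑ i, z i ^ (q - 1) * ε i)
        - (q - 1) * ∑ i, z i ^ (q - 2) * ε i ^ 2 + (q + 1) * (∑ i, z i ^ (q - 1) * ε i) ^ 2 := by
  have hyt := eventually_forall_pos_add_mul hy w
  have hzt := eventually_forall_pos_add_mul hz ε
  have hf : (fun t : ℝ => pnorm p (y + t • w) / pnorm q (z + t • ε)) =ᶠ[𝓝 0]
      fun t => (∑ k, (y k + t * w k) ^ p) ^ (1 / p) * (∑ i, (z i + t * ε i) ^ q) ^ (-(1 / q)) := by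
    filter_upwards [hyt, hzt] with t hyt hzt
    rw [pnorm_of_nonneg p (x := y + t • w) (fun k => by simpa using (hyt k).le),
      pnorm_of_nonneg q (x := z + t • ε) (fun i => by simpa using (hzt i).le),
      Real.rpow_neg (Finset.sum_nonneg fun i _ => Real.rpow_nonneg (hzt i).le q),
      ← div_eq_mul_inv]
    simp
  have hP := fun t (ht : ∀ k, 0 < y k + t * w k) =>
    hasDerivAt_sum_mul_rpow_line 1 y w p t fun k => (ht k).ne'
  have hQ := fun t (ht : ∀ i, 0 < z i + t * ε i) =>
    hasDerivAt_sum_mul_rpow_line 1 z ε q t fun i => (ht i).ne'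
  simp only [Pi.one_apply, one_mul] at hP hQ
  have hP' := (hasDerivAt_sum_mul_rpow_line w y w (p - 1) 0
    fun k => by simpa using (hy k).ne').const_mul p
  have hQ' := (hasDerivAt_sum_mul_rpow_line ε z ε (q - 1) 0
    fun i => by simpa using (hz i).ne').const_mul q
  rw [hf.iteratedDeriv_eq, iteratedDeriv_succ, iteratedDeriv_one,
    deriv_deriv_rpow_mul_rpow (hyt.mono hP) (hzt.mono hQ) hP' hQ'
      (by simpa using sum_rpow_eq_one_of_pnorm_eq_one hp (fun k => (hy k).le) hyp)
      (by simpa using sum_rpow_eq_one_of_pnorm_eq_one hq (fun i => (hz i).le) hzq)]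
  have hsq : ∀ (r : ℝ) (x v : Fin n → ℝ),
      ∑ i, v i * v i * x i ^ (r - 1 - 1) = ∑ i, x i ^ (r - 2) * v i ^ 2 := fun r x v =>
    Finset.sum_congr rfl fun i _ => by rw [sub_sub, one_add_one_eq_two]; ring
  have hlin : ∀ (r : ℝ) (x v : Fin n → ℝ),
      ∑ i, v i * x i ^ (r - 1) = ∑ i, x i ^ (r - 1) * v i := fun r x v =>
    Finset.sum_congr rfl fun i _ => mul_comm _ _
  simp only [zero_mul, add_zero, hsq, hlin]
  field_simp
  ring

theorem sq_sum_rpow_mul_le {ι : Type*} [Fintype ι] (q : ℝ) {z : ι → ℝ} (hz : ∀ i, 0 < z i)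
    (ε : ι → ℝ) :
    (∑ i, z i ^ (q - 1) * ε i) ^ 2 ≤ (∑ i, z i ^ q) * ∑ i, z i ^ (q - 2) * ε i ^ 2 := by
  refine Finset.sum_sq_le_sum_mul_sum_of_sq_le_mul _
    (fun i _ => (Real.rpow_pos_of_pos (hz i) q).le)
    (fun i _ => mul_nonneg (Real.rpow_nonneg (hz i).le _) (sq_nonneg _)) fun i _ => le_of_eq ?_
  rw [mul_pow, sq (z i ^ (q - 1)), ← Real.rpow_add (hz i), ← mul_assoc, ← Real.rpow_add (hz i)]
  ring_nf

theorem Matrix.mulVec_sq_le_mulVec_mul_mulVec {m ι : Type*} [Fintype ι] {A : Matrix m ι ℝ}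
    (hA : ∀ k i, 0 ≤ A k i) {z : ι → ℝ} (hz : ∀ i, 0 < z i) (ε : ι → ℝ) (k : m) :
    (A *ᵥ ε) k ^ 2 ≤ (A *ᵥ z) k * (A *ᵥ fun i => ε i ^ 2 / z i) k :=
  Finset.sum_sq_le_sum_mul_sum_of_sq_le_mul _ (fun i _ => mul_nonneg (hA k i) (hz i).le)
    (fun i _ => mul_nonneg (hA k i) (div_nonneg (sq_nonneg _) (hz i).le)) fun i _ =>
      le_of_eq (by field_simp [(hz i).ne'])

theorem Matrix.mulVec_pos {m ι : Type*} [Fintype ι] [Nonempty ι] {A : Matrix m ι ℝ}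
    (hA : ∀ k i, 0 < A k i) {z : ι → ℝ} (hz : ∀ i, 0 < z i) (k : m) : 0 < (A *ᵥ z) k :=
  Finset.sum_pos (fun i _ => mul_pos (hA k i) (hz i)) Finset.univ_nonempty

theorem sum_rpow_mul_mulVec_sq_le {m ι : Type*} [Fintype m] [Fintype ι] {p q : ℝ}
    {A : Matrix m ι ℝ} (hA : ∀ k i, 0 ≤ A k i) {z : ι → ℝ} (hz : ∀ i, 0 < z i)
    (hAz : ∀ k, 0 < (A *ᵥ z) k)
    (hcrit : (fun k => (A *ᵥ z) k ^ (p - 1)) ᵥ* A = fun i => z i ^ (q - 1)) (ε : ι → ℝ) :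
    ∑ k, (A *ᵥ z) k ^ (p - 2) * (A *ᵥ ε) k ^ 2 ≤ ∑ i, z i ^ (q - 2) * ε i ^ 2 :=
  calc ∑ k, (A *ᵥ z) k ^ (p - 2) * (A *ᵥ ε) k ^ 2
      ≤ ∑ k, (A *ᵥ z) k ^ (p - 2) * ((A *ᵥ z) k * (A *ᵥ fun i => ε i ^ 2 / z i) k) := by
        gcongr with k
        · exact Real.rpow_nonneg (hAz k).le _
        · exact A.mulVec_sq_le_mulVec_mul_mulVec hA hz ε k
    _ = (fun k => (A *ᵥ z) k ^ (p - 1)) ⬝ᵥ (A *ᵥ fun i => ε i ^ 2 / z i) := by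
        refine Finset.sum_congr rfl fun k _ => ?_
        rw [← mul_assoc, ← Real.rpow_add_one (hAz k).ne']
        ring_nf
    _ = ∑ i, z i ^ (q - 1) * (ε i ^ 2 / z i) := by rw [dotProduct_mulVec, hcrit]; rfl
    _ = ∑ i, z i ^ (q - 2) * ε i ^ 2 := by
        refine Finset.sum_congr rfl fun i _ => ?_
        rw [show q - 1 = q - 2 + 1 by ring, Real.rpow_add_one (hz i).ne']
        field_simp [(hz i).ne']

theorem stmt9_general (n : ℕ) (p q N : ℝ) (hp : 1 < p) (hpq : p ≤ q) (hN : 1 ≤ N)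
    (A : Matrix (Fin n) (Fin n) ℝ) (hA : ∀ i j, A i j ∈ Set.Icc (1 / N) 1)
    (z : Fin n → ℝ) (hz : ∀ i, 0 < z i)
    (hzq : pnorm q z = 1) (hAz : pnorm p (A.mulVec z) = 1)
    (hcrit : ∀ i, ∑ k, (A.mulVec z k) ^ (p - 1) * A k i = z i ^ (q - 1))
    (ε : Fin n → ℝ) :
    iteratedDeriv 2
      (fun t : ℝ => pnorm p (A.mulVec (z + t • ε)) / pnorm q (z + t • ε)) 0 ≤ 0 := by
  have hApos : ∀ k i, 0 < A k i := fun k i => (one_div_pos.2 (by linarith)).trans_le (hA k i).1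
  have hy : ∀ k, 0 < (A *ᵥ z) k := fun k =>
    have : Nonempty (Fin n) := ⟨k⟩
    A.mulVec_pos hApos hz k
  have hcrit' : (fun k => (A *ᵥ z) k ^ (p - 1)) ᵥ* A = fun i => z i ^ (q - 1) := funext hcrit
  have hc : ∑ k, (A *ᵥ z) k ^ (p - 1) * (A *ᵥ ε) k = ∑ i, z i ^ (q - 1) * ε i := by
    change _ ⬝ᵥ _ = _ ⬝ᵥ _
    rw [dotProduct_mulVec, hcrit']
  have hBF := sum_rpow_mul_mulVec_sq_le (fun k i => (hApos k i).le) hz hy hcrit' ε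
  have hcBG := sq_sum_rpow_mul_le q hz ε
  rw [sum_rpow_eq_one_of_pnorm_eq_one (by linarith) (fun i => (hz i).le) hzq, one_mul] at hcBG
  simp only [mulVec_add, mulVec_smul]
  rw [iteratedDeriv_two_pnorm_div_pnorm_line (by linarith) (by linarith) hy hz hAz hzq, hc]
  linarith [mul_le_mul_of_nonneg_left hBF (by linarith : (0 : ℝ) ≤ p - 1),
    mul_le_mul_of_nonneg_left hcBG (by linarith : (0 : ℝ) ≤ q - p)]

/-- at a critical point `z` of `f(x) = ‖Ax‖_p/‖x‖_q` (normalized so that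
`‖z‖_q = ‖Az‖_p = 1`), the Hessian of `f` is negative semidefinite: along any direction
`ε`, the second derivative of `t ↦ f(z + tε)` at `t = 0` is at most `0`. -/
theorem stmt9 (n : ℕ) (hn : 1 ≤ n) (p q N : ℝ) (hp : 1 < p) (hpq : p ≤ q) (hN : 1 ≤ N)
    (A : Matrix (Fin n) (Fin n) ℝ) (hA : ∀ i j, A i j ∈ Set.Icc (1 / N) 1)
    (z : Fin n → ℝ) (hz : ∀ i, 0 < z i)
    (hzq : pnorm q z = 1) (hAz : pnorm p (A.mulVec z) = 1)
    (hcrit : ∀ i, ∑ k, (A.mulVec z k) ^ (p - 1) * A k i = z i ^ (q - 1))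
    (ε : Fin n → ℝ) :
    iteratedDeriv 2
      (fun t : ℝ => pnorm p (A.mulVec (z + t • ε)) / pnorm q (z + t • ε)) 0 ≤ 0 :=
  stmt9_general n p q N hp hpq hN A hA z hz hzq hAz hcrit ε
end

section
/- Let 1 < p ≤ q and let A be an n×n matrix with all entries in [1/N, 1]. For every τ > 0, the upper level set N_τ = {x ∈ S_q^n : f(x) ≥ τ} is path-connected. -/
open Finset
open scoped Matrix

noncomputable def powerMean (q s a b : ℝ) : ℝ :=
  ((1 - s) * a ^ q + s * b ^ q) ^ (1 / q)

section PowerMean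

variable {p q s a b : ℝ}

lemma powerMean_base_nonneg (hs : s ∈ Set.Icc (0 : ℝ) 1) (ha : 0 ≤ a) (hb : 0 ≤ b) :
    0 ≤ (1 - s) * a ^ q + s * b ^ q :=
  add_nonneg (mul_nonneg (sub_nonneg.2 hs.2) (Real.rpow_nonneg ha q))
    (mul_nonneg hs.1 (Real.rpow_nonneg hb q))

lemma powerMean_nonneg (hs : s ∈ Set.Icc (0 : ℝ) 1) (ha : 0 ≤ a) (hb : 0 ≤ b) :
    0 ≤ powerMean q s a b :=
  Real.rpow_nonneg (powerMean_base_nonneg hs ha hb) _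

lemma powerMean_rpow (hq : q ≠ 0) (hs : s ∈ Set.Icc (0 : ℝ) 1) (ha : 0 ≤ a) (hb : 0 ≤ b) :
    powerMean q s a b ^ q = (1 - s) * a ^ q + s * b ^ q := by
  rw [powerMean, one_div, Real.rpow_inv_rpow (powerMean_base_nonneg hs ha hb) hq]

lemma powerMean_zero_weight (hq : q ≠ 0) (ha : 0 ≤ a) : powerMean q 0 a b = a := by
  simp [powerMean, Real.rpow_rpow_inv ha hq]

lemma powerMean_one_weight (hq : q ≠ 0) (hb : 0 ≤ b) : powerMean q 1 a b = b := by
  simp [powerMean, Real.rpow_rpow_inv hb hq]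

lemma continuous_powerMean (hq : 0 < q) : Continuous fun s => powerMean q s a b :=
  (Real.continuous_rpow_const (by positivity)).comp (by fun_prop)

lemma powerMean_mul {c : ℝ} (hq : q ≠ 0) (hs : s ∈ Set.Icc (0 : ℝ) 1) (hc : 0 ≤ c)
    (ha : 0 ≤ a) (hb : 0 ≤ b) : powerMean q s (c * a) (c * b) = c * powerMean q s a b := by
  have hcq : 0 ≤ c ^ q := Real.rpow_nonneg hc q
  rw [powerMean, Real.mul_rpow hc ha, Real.mul_rpow hc hb,
    show (1 - s) * (c ^ q * a ^ q) + s * (c ^ q * b ^ q) = c ^ q * ((1 - s) * a ^ q + s * b ^ q)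
      by ring, Real.mul_rpow hcq (powerMean_base_nonneg hs ha hb), one_div,
    Real.rpow_rpow_inv hc hq, powerMean, one_div]

lemma powerMean_le_powerMean (hp : 0 < p) (hpq : p ≤ q) (hs : s ∈ Set.Icc (0 : ℝ) 1)
    (ha : 0 ≤ a) (hb : 0 ≤ b) : powerMean p s a b ≤ powerMean q s a b := by
  have hq : 0 < q := hp.trans_le hpq
  have hpow : ∀ {t : ℝ}, 0 ≤ t → (t ^ p) ^ (q / p) = t ^ q := fun ht => by
    rw [← Real.rpow_mul ht, mul_div_cancel₀ q hp.ne']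
  -- convexity of `t ↦ t ^ (q / p)`, applied to `a ^ p` and `b ^ p`
  have hconv := (convexOn_rpow ((one_le_div hp).2 hpq)).2 (Real.rpow_nonneg ha p)
    (Real.rpow_nonneg hb p) (sub_nonneg.2 hs.2) hs.1 (sub_add_cancel 1 s)
  simp only [smul_eq_mul, hpow ha, hpow hb] at hconv
  calc powerMean p s a b = (((1 - s) * a ^ p + s * b ^ p) ^ (q / p)) ^ (1 / q) := by
        rw [← Real.rpow_mul (powerMean_base_nonneg hs ha hb), powerMean]
        field_simp
    _ ≤ powerMean q s a b :=
        Real.rpow_le_rpow (by positivity [powerMean_base_nonneg (q := p) hs ha hb]) hconv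
          (by positivity)

end PowerMean

section Minkowski

variable {q s a b : ℝ}

/-- Minkowski's inequality: `powerMean q s a b` is the `ℓ_q` norm of
`((1 - s) ^ (1 / q) * a, s ^ (1 / q) * b)`. -/
lemma powerMean_add_le (hq : 1 ≤ q) (hs : s ∈ Set.Icc (0 : ℝ) 1) {a' b' : ℝ} (ha : 0 ≤ a)
    (hb : 0 ≤ b) (ha' : 0 ≤ a') (hb' : 0 ≤ b') :
    powerMean q s (a + a') (b + b') ≤ powerMean q s a b + powerMean q s a' b' := by
  have hw : ∀ {w z : ℝ}, 0 ≤ w → 0 ≤ z → (w ^ (1 / q) * z) ^ q = w * z ^ q := fun hw0 hz0 => by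
    rw [Real.mul_rpow (Real.rpow_nonneg hw0 _) hz0, one_div,
      Real.rpow_inv_rpow hw0 (by positivity)]
  have h1s : 0 ≤ 1 - s := sub_nonneg.2 hs.2
  set c := (1 - s) ^ (1 / q)
  set d := s ^ (1 / q)
  have hc : 0 ≤ c := Real.rpow_nonneg h1s _
  have hd : 0 ≤ d := Real.rpow_nonneg hs.1 _
  have key := Real.Lp_add_le_of_nonneg univ (f := ![c * a, d * b]) (g := ![c * a', d * b']) hq
    (by simp [Fin.forall_fin_two]; constructor <;> positivity)
    (by simp [Fin.forall_fin_two]; constructor <;> positivity)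
  simp only [Fin.sum_univ_two, Matrix.cons_val_zero, Matrix.cons_val_one, ← mul_add] at key
  rwa [hw h1s ha, hw hs.1 hb, hw h1s ha', hw hs.1 hb', hw h1s (add_nonneg ha ha'),
    hw hs.1 (add_nonneg hb hb')] at key

lemma powerMean_sum_le {ι : Type*} (hq : 1 ≤ q) (hs : s ∈ Set.Icc (0 : ℝ) 1) (t : Finset ι)
    {x y : ι → ℝ} (hx : ∀ j, 0 ≤ x j) (hy : ∀ j, 0 ≤ y j) :
    powerMean q s (∑ j ∈ t, x j) (∑ j ∈ t, y j) ≤ ∑ j ∈ t, powerMean q s (x j) (y j) := by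
  classical
  induction t using Finset.induction_on with
  | empty =>
    have hq0 : q ≠ 0 := by positivity
    simp [powerMean, Real.zero_rpow hq0, Real.zero_rpow (inv_ne_zero hq0)]
  | insert j t hj ih =>
    rw [sum_insert hj, sum_insert hj, sum_insert hj]
    exact (powerMean_add_le hq hs (hx j) (hy j) (sum_nonneg fun i _ => hx i)
      (sum_nonneg fun i _ => hy i)).trans (add_le_add_right ih _)

end Minkowski

section Pnorm

variable {n : ℕ} {p q s : ℝ} {x y : Fin n → ℝ}

lemma pnorm_nonneg (x : Fin n → ℝ) : 0 ≤ pnorm p x :=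
  Real.rpow_nonneg (sum_nonneg fun i _ => Real.rpow_nonneg (abs_nonneg (x i)) p) _

lemma pnorm_rpow (hp : p ≠ 0) (hx : ∀ i, 0 ≤ x i) : pnorm p x ^ p = ∑ i, x i ^ p := by
  rw [pnorm, one_div,
    Real.rpow_inv_rpow (sum_nonneg fun i _ => Real.rpow_nonneg (abs_nonneg (x i)) p) hp]
  simp only [abs_of_nonneg (hx _)]

lemma pnorm_powerMean_rpow (hq : q ≠ 0) (hs : s ∈ Set.Icc (0 : ℝ) 1) (hx : ∀ i, 0 ≤ x i)
    (hy : ∀ i, 0 ≤ y i) :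
    pnorm q (fun i => powerMean q s (x i) (y i)) ^ q
      = (1 - s) * pnorm q x ^ q + s * pnorm q y ^ q := by
  rw [pnorm_rpow hq fun i => powerMean_nonneg hs (hx i) (hy i), pnorm_rpow hq hx,
    pnorm_rpow hq hy, mul_sum, mul_sum, ← sum_add_distrib]
  exact sum_congr rfl fun i _ => powerMean_rpow hq hs (hx i) (hy i)

lemma pnorm_powerMean_eq_one (hq : q ≠ 0) (hs : s ∈ Set.Icc (0 : ℝ) 1) (hx : ∀ i, 0 ≤ x i)
    (hy : ∀ i, 0 ≤ y i) (hx1 : pnorm q x = 1) (hy1 : pnorm q y = 1) :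
    pnorm q (fun i => powerMean q s (x i) (y i)) = 1 := by
  rw [← Real.rpow_left_inj (pnorm_nonneg _) zero_le_one hq, pnorm_powerMean_rpow hq hs hx hy,
    hx1, hy1]
  simp

end Pnorm

section MulVec

variable {n : ℕ} {p q s : ℝ} {A : Matrix (Fin n) (Fin n) ℝ} {x y : Fin n → ℝ}

lemma mulVec_nonneg (hA : ∀ i j, 0 ≤ A i j) (hx : ∀ i, 0 ≤ x i) (i : Fin n) :
    0 ≤ (A *ᵥ x) i :=
  show 0 ≤ ∑ j, A i j * x j from sum_nonneg fun j _ => mul_nonneg (hA i j) (hx j)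

lemma powerMean_mulVec_le (hq : 1 ≤ q) (hs : s ∈ Set.Icc (0 : ℝ) 1) (hA : ∀ i j, 0 ≤ A i j)
    (hx : ∀ i, 0 ≤ x i) (hy : ∀ i, 0 ≤ y i) (i : Fin n) :
    powerMean q s ((A *ᵥ x) i) ((A *ᵥ y) i) ≤ (A *ᵥ fun j => powerMean q s (x j) (y j)) i := by
  calc powerMean q s ((A *ᵥ x) i) ((A *ᵥ y) i)
      ≤ ∑ j, powerMean q s (A i j * x j) (A i j * y j) :=
        powerMean_sum_le hq hs univ (fun j => mul_nonneg (hA i j) (hx j))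
          fun j => mul_nonneg (hA i j) (hy j)
    _ = (A *ᵥ fun j => powerMean q s (x j) (y j)) i :=
        sum_congr rfl fun j _ => powerMean_mul (by positivity) hs (hA i j) (hx j) (hy j)

lemma pnorm_mulVec_rpow_le (hp : 0 < p) (hpq : p ≤ q) (hq : 1 ≤ q) (hs : s ∈ Set.Icc (0 : ℝ) 1)
    (hA : ∀ i j, 0 ≤ A i j) (hx : ∀ i, 0 ≤ x i) (hy : ∀ i, 0 ≤ y i) :
    (1 - s) * pnorm p (A *ᵥ x) ^ p + s * pnorm p (A *ᵥ y) ^ p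
      ≤ pnorm p (A *ᵥ fun j => powerMean q s (x j) (y j)) ^ p := by
  have hAx := mulVec_nonneg hA hx
  have hAy := mulVec_nonneg hA hy
  rw [pnorm_rpow hp.ne' hAx, pnorm_rpow hp.ne' hAy,
    pnorm_rpow hp.ne' (mulVec_nonneg hA fun j => powerMean_nonneg hs (hx j) (hy j)),
    mul_sum, mul_sum, ← sum_add_distrib]
  gcongr with i
  rw [← powerMean_rpow hp.ne' hs (hAx i) (hAy i)]
  gcongr
  · exact powerMean_nonneg hs (hAx i) (hAy i)
  · exact (powerMean_le_powerMean hp hpq hs (hAx i) (hAy i)).trans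
      (powerMean_mulVec_le hq hs hA hx hy i)

lemma le_pnorm_mulVec_powerMean {τ : ℝ} (hτ : 0 ≤ τ) (hp : 0 < p) (hpq : p ≤ q) (hq : 1 ≤ q)
    (hs : s ∈ Set.Icc (0 : ℝ) 1) (hA : ∀ i j, 0 ≤ A i j) (hx : ∀ i, 0 ≤ x i)
    (hy : ∀ i, 0 ≤ y i) (hxτ : τ ≤ pnorm p (A *ᵥ x)) (hyτ : τ ≤ pnorm p (A *ᵥ y)) :
    τ ≤ pnorm p (A *ᵥ fun j => powerMean q s (x j) (y j)) := by
  rw [← Real.rpow_le_rpow_iff hτ (pnorm_nonneg _) hp]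
  calc τ ^ p = (1 - s) * τ ^ p + s * τ ^ p := by ring
    _ ≤ (1 - s) * pnorm p (A *ᵥ x) ^ p + s * pnorm p (A *ᵥ y) ^ p := by
        have := hs.1; have := sub_nonneg.2 hs.2
        gcongr
    _ ≤ _ := pnorm_mulVec_rpow_le hp hpq hq hs hA hx hy

end MulVec

theorem stmt10_general (n : ℕ) (p q N : ℝ) (hp : 1 < p) (hpq : p ≤ q) (hN : 1 ≤ N)
    (A : Matrix (Fin n) (Fin n) ℝ) (hA : ∀ i j, A i j ∈ Set.Icc (1 / N) 1)
    (τ : ℝ) (hτ : 0 < τ) :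
    ∀ x ∈ {x : Fin n → ℝ | (∀ i, 0 ≤ x i) ∧ pnorm q x = 1 ∧
        τ ≤ pnorm p (A.mulVec x) / pnorm q x},
      ∀ y ∈ {x : Fin n → ℝ | (∀ i, 0 ≤ x i) ∧ pnorm q x = 1 ∧
        τ ≤ pnorm p (A.mulVec x) / pnorm q x},
      JoinedIn {x : Fin n → ℝ | (∀ i, 0 ≤ x i) ∧ pnorm q x = 1 ∧
        τ ≤ pnorm p (A.mulVec x) / pnorm q x} x y := by
  have hp0 : 0 < p := by linarith
  have hq : 1 ≤ q := by linarith
  have hA0 : ∀ i j, 0 ≤ A i j := fun i j => (by positivity : (0 : ℝ) ≤ 1 / N).trans (hA i j).1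
  rintro x ⟨hx0, hx1, hxτ⟩ y ⟨hy0, hy1, hyτ⟩
  rw [hx1, div_one] at hxτ
  rw [hy1, div_one] at hyτ
  refine JoinedIn.ofLine (f := fun s i => powerMean q s (x i) (y i))
    (continuous_pi fun i => continuous_powerMean (by linarith)).continuousOn
    (funext fun i => powerMean_zero_weight (by positivity) (hx0 i))
    (funext fun i => powerMean_one_weight (by positivity) (hy0 i)) ?_
  rintro _ ⟨s, hs, rfl⟩
  have hγ1 := pnorm_powerMean_eq_one (by positivity) hs hx0 hy0 hx1 hy1
  refine ⟨fun i => powerMean_nonneg hs (hx0 i) (hy0 i), hγ1, ?_⟩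
  rw [hγ1, div_one]
  exact le_pnorm_mulVec_powerMean hτ.le hp0 hpq hq hs hA0 hx0 hy0 hxτ hyτ

/-- for every `τ > 0`, the upper level set
`N_τ = {x ∈ S_q^n : f(x) ≥ τ}` is connected (any two of its points are joined
by a path inside it). -/
theorem stmt10 (n : ℕ) (hn : 1 ≤ n) (p q N : ℝ) (hp : 1 < p) (hpq : p ≤ q) (hN : 1 ≤ N)
    (A : Matrix (Fin n) (Fin n) ℝ) (hA : ∀ i j, A i j ∈ Set.Icc (1 / N) 1)
    (τ : ℝ) (hτ : 0 < τ) :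
    ∀ x ∈ {x : Fin n → ℝ | (∀ i, 0 ≤ x i) ∧ pnorm q x = 1 ∧
        τ ≤ pnorm p (A.mulVec x) / pnorm q x},
      ∀ y ∈ {x : Fin n → ℝ | (∀ i, 0 ≤ x i) ∧ pnorm q x = 1 ∧
        τ ≤ pnorm p (A.mulVec x) / pnorm q x},
      JoinedIn {x : Fin n → ℝ | (∀ i, 0 ≤ x i) ∧ pnorm q x = 1 ∧
        τ ≤ pnorm p (A.mulVec x) / pnorm q x} x y :=
  stmt10_general n p q N hp hpq hN A hA τ hτ
end

section
/- Let p > 2 be a real number. Then for every real x, (|1+x|^p + |1−x|^p)/(1 + |x|^p) ≤ 2^{p-1}. Moreover, for every ε > 0 there exists δ > 0 such that whenever |x| ∉ [1−ε, 1+ε], one has (|1+x|^p + |1−x|^p)/(1 + |x|^p) ≤ 2^{p-1} − δ. -/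
open Real Set

-- a^q + b^q ≤ (a+b)^q for a,b ≥ 0, 1 ≤ q
lemma rpow_add_rpow_le_rpow' {a b q : ℝ} (ha : 0 ≤ a) (hb : 0 ≤ b) (hq : 1 ≤ q) :
    a ^ q + b ^ q ≤ (a + b) ^ q := by
  have hab : 0 ≤ a + b := by linarith
  have h1 : a ^ q ≤ a * (a + b) ^ (q - 1) := by
    calc a ^ q = a ^ (1 + (q - 1)) := by ring_nf
    _ = a ^ (1:ℝ) * a ^ (q - 1) := by
        rcases eq_or_lt_of_le ha with h | h
        · rcases eq_or_lt_of_le hq with hq' | hq'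
          · simp [← h, ← hq']
          · rw [← h]
            rw [Real.zero_rpow (by linarith), Real.zero_rpow (by norm_num), zero_mul]
        · exact Real.rpow_add h 1 (q - 1)
    _ ≤ a * (a + b) ^ (q - 1) := by
        rw [Real.rpow_one]
        exact mul_le_mul_of_nonneg_left
          (Real.rpow_le_rpow ha (by linarith) (by linarith)) ha
  have h2 : b ^ q ≤ b * (a + b) ^ (q - 1) := by
    calc b ^ q = b ^ (1 + (q - 1)) := by ring_nf
    _ = b ^ (1:ℝ) * b ^ (q - 1) := by
        rcases eq_or_lt_of_le hb with h | h
        · rcases eq_or_lt_of_le hq with hq' | hq'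
          · simp [← h, ← hq']
          · rw [← h]
            rw [Real.zero_rpow (by linarith), Real.zero_rpow (by norm_num), zero_mul]
        · exact Real.rpow_add h 1 (q - 1)
    _ ≤ b * (a + b) ^ (q - 1) := by
        rw [Real.rpow_one]
        exact mul_le_mul_of_nonneg_left
          (Real.rpow_le_rpow hb (by linarith) (by linarith)) hb
  calc a ^ q + b ^ q ≤ (a + b) * (a + b) ^ (q - 1) := by linarith [h1, h2]; 
  _ = (a + b) ^ q := by
      rcases eq_or_lt_of_le hab with h | h
      · rw [← h, zero_mul, Real.zero_rpow (by linarith)]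
      · nth_rewrite 1 [← Real.rpow_one (a+b)]
        rw [← Real.rpow_add h]
        ring_nf

-- (t^2)^(p/2) = |t|^p
lemma sq_rpow_half (p t : ℝ) : (t ^ 2) ^ (p / 2) = |t| ^ p := by
  rw [← sq_abs, ← Real.rpow_natCast |t| 2, ← Real.rpow_mul (abs_nonneg t)]
  congr 1
  push_cast
  ring

-- strict midpoint: (1+u)^q < 2^(q-1)(1+u^q) for u ≥ 0, u ≠ 1, q > 1
lemma mid_strict {q u : ℝ} (hq : 1 < q) (hu : 0 ≤ u) (hu1 : u ≠ 1) :
    (1 + u) ^ q < 2 ^ (q - 1) * (1 + u ^ q) := by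
  have h := (strictConvexOn_rpow hq).2 (Set.mem_Ici.mpr zero_le_one)
    (Set.mem_Ici.mpr hu) (fun h => hu1 h.symm) (by norm_num : (0:ℝ) < 1/2)
    (by norm_num : (0:ℝ) < 1/2) (by norm_num)
  simp only [smul_eq_mul, Real.one_rpow] at h
  have h2 : ((1 + u)/2) ^ q < (1 + u ^ q)/2 := by
    rw [show (1+u)/2 = 1/2*1 + 1/2*u by ring]
    linarith [h]
  have hpos : (0:ℝ) < 2 ^ q := Real.rpow_pos_of_pos two_pos q
  have key : (1 + u) ^ q = 2 ^ q * ((1 + u)/2) ^ q := by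
    rw [← Real.mul_rpow (by norm_num) (by linarith)]
    ring_nf
  rw [key]
  calc 2 ^ q * ((1 + u)/2) ^ q < 2 ^ q * ((1 + u ^ q)/2) :=
        mul_lt_mul_of_pos_left h2 hpos
  _ = 2 ^ (q - 1) * (1 + u ^ q) := by
      rw [Real.rpow_sub two_pos, Real.rpow_one]; ring

-- nonstrict midpoint
lemma mid_le {q u : ℝ} (hq : 1 < q) (hu : 0 ≤ u) :
    (1 + u) ^ q ≤ 2 ^ (q - 1) * (1 + u ^ q) := by
  rcases eq_or_ne u 1 with h | h
  · subst h
    rw [Real.one_rpow, show (1:ℝ)+1 = 2 by norm_num,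
      Real.rpow_sub two_pos, Real.rpow_one, div_mul_cancel₀ _ (two_ne_zero)]
  · exact (mid_strict hq hu h).le

-- key inequality, strict version
lemma key_strict (p : ℝ) (hp : 2 < p) (x : ℝ) (hx : x ^ 2 ≠ 1) :
    |1 + x| ^ p + |1 - x| ^ p < 2 ^ (p - 1) * (1 + |x| ^ p) := by
  have hq : 1 < p / 2 := by linarith
  have h1 : |1 + x| ^ p + |1 - x| ^ p ≤ (2 * (1 + x ^ 2)) ^ (p / 2) := by
    rw [← sq_rpow_half p (1 + x), ← sq_rpow_half p (1 - x)]
    have := rpow_add_rpow_le_rpow' (sq_nonneg (1+x)) (sq_nonneg (1-x)) hq.le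
    convert this using 2
    ring
  have h2 : (2 * (1 + x ^ 2)) ^ (p / 2) < 2 ^ (p - 1) * (1 + |x| ^ p) := by
    rw [Real.mul_rpow (by norm_num) (by positivity)]
    have h3 : (1 + x ^ 2) ^ (p / 2) < 2 ^ (p / 2 - 1) * (1 + (x ^ 2) ^ (p / 2)) :=
      mid_strict hq (sq_nonneg x) hx
    rw [sq_rpow_half] at h3
    calc (2:ℝ) ^ (p/2) * (1 + x ^ 2) ^ (p/2)
        < 2 ^ (p/2) * (2 ^ (p/2 - 1) * (1 + |x| ^ p)) :=
          mul_lt_mul_of_pos_left h3 (Real.rpow_pos_of_pos two_pos _)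
    _ = 2 ^ (p - 1) * (1 + |x| ^ p) := by
        rw [← mul_assoc, ← Real.rpow_add two_pos]
        ring_nf
  linarith

-- key inequality, nonstrict
lemma key_le (p : ℝ) (hp : 2 < p) (x : ℝ) :
    |1 + x| ^ p + |1 - x| ^ p ≤ 2 ^ (p - 1) * (1 + |x| ^ p) := by
  have hq : 1 < p / 2 := by linarith
  have h1 : |1 + x| ^ p + |1 - x| ^ p ≤ (2 * (1 + x ^ 2)) ^ (p / 2) := by
    rw [← sq_rpow_half p (1 + x), ← sq_rpow_half p (1 - x)]
    have := rpow_add_rpow_le_rpow' (sq_nonneg (1+x)) (sq_nonneg (1-x)) hq.le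
    convert this using 2
    ring
  have h2 : (2 * (1 + x ^ 2)) ^ (p / 2) ≤ 2 ^ (p - 1) * (1 + |x| ^ p) := by
    rw [Real.mul_rpow (by norm_num) (by positivity)]
    have h3 : (1 + x ^ 2) ^ (p / 2) ≤ 2 ^ (p / 2 - 1) * (1 + (x ^ 2) ^ (p / 2)) :=
      mid_le hq (sq_nonneg x)
    rw [sq_rpow_half] at h3
    calc (2:ℝ) ^ (p/2) * (1 + x ^ 2) ^ (p/2)
        ≤ 2 ^ (p/2) * (2 ^ (p/2 - 1) * (1 + |x| ^ p)) :=
          mul_le_mul_of_nonneg_left h3 (Real.rpow_pos_of_pos two_pos _).le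
    _ = 2 ^ (p - 1) * (1 + |x| ^ p) := by
        rw [← mul_assoc, ← Real.rpow_add two_pos]
        ring_nf
  linarith

lemma den_pos (p x : ℝ) : 0 < 1 + |x| ^ p :=
  add_pos_of_pos_of_nonneg one_pos (Real.rpow_nonneg (abs_nonneg x) p)

/-- for `p > 2`, `(|1+x|^p + |1-x|^p)/(1+|x|^p) ≤ 2^{p-1}` for all real `x`,
and for every `ε > 0` there is `δ > 0` giving the improved bound `2^{p-1} - δ` whenever
`|x| ∉ [1-ε, 1+ε]`. -/
theorem stmt13 (p : ℝ) (hp : 2 < p) :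
    (∀ x : ℝ, (|1 + x| ^ p + |1 - x| ^ p) / (1 + |x| ^ p) ≤ 2 ^ (p - 1)) ∧
      ∀ ε : ℝ, 0 < ε → ∃ δ : ℝ, 0 < δ ∧
        ∀ x : ℝ, |x| ∉ Set.Icc (1 - ε) (1 + ε) →
          (|1 + x| ^ p + |1 - x| ^ p) / (1 + |x| ^ p) ≤ 2 ^ (p - 1) - δ := by
  have hp0 : (0:ℝ) < p := by linarith
  constructor
  · intro x
    rw [div_le_iff₀ (den_pos p x)]
    exact key_le p hp x
  · intro ε hε
    set f : ℝ → ℝ := fun x => (|1 + x| ^ p + |1 - x| ^ p) / (1 + |x| ^ p) with hf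
    have hcont : Continuous f := by
      apply Continuous.div
      · exact ((continuous_abs.comp (by continuity)).rpow_const
          (fun x => Or.inr hp0.le)).add
          ((continuous_abs.comp (by continuity)).rpow_const (fun x => Or.inr hp0.le))
      · exact continuous_const.add (continuous_abs.rpow_const (fun x => Or.inr hp0.le))
      · exact fun x => (den_pos p x).ne'
    have hc : (0:ℝ) < 2 ^ ((p-2)/p) - 1 := by
      have h1 : (1:ℝ) < 2 ^ ((p-2)/p) :=
        (Real.one_lt_rpow_iff_of_pos two_pos).mpr (Or.inl ⟨one_lt_two, div_pos (by linarith) hp0⟩)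
      linarith
    set c : ℝ := 2 ^ ((p-2)/p) - 1 with hcdef
    set R : ℝ := max (1+ε) (2/c) with hRdef
    have hR1 : 1 + ε ≤ R := le_max_left _ _
    have hR0 : (0:ℝ) < R := lt_of_lt_of_le (by linarith) hR1
    have hRinv : 0 < 1/R := one_div_pos.mpr hR0
    -- tail bound for |x| > R
    have htail : ∀ x : ℝ, R < |x| → f x ≤ 2 * (1 + 1/R) ^ p := by
      intro x hxR
      have h1 : (1:ℝ) ≤ |x|/R := (one_le_div hR0).mpr hxR.le
      have hax : 1 + |x| ≤ (1 + 1/R) * |x| := by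
        have : |x|/R = (1/R) * |x| := by ring
        rw [this] at h1
        nlinarith [abs_nonneg x]
      have hb1 : |1 + x| ≤ (1 + 1/R) * |x| := by
        calc |1 + x| ≤ |(1:ℝ)| + |x| := abs_add_le 1 x
        _ = 1 + |x| := by rw [abs_one]
        _ ≤ _ := hax
      have hb2 : |1 - x| ≤ (1 + 1/R) * |x| := by
        calc |1 - x| ≤ |(1:ℝ)| + |x| := abs_sub 1 x
        _ = 1 + |x| := by rw [abs_one]
        _ ≤ _ := hax
      have hco : (0:ℝ) ≤ 1 + 1/R := by linarith
      have hr1 : |1 + x| ^ p ≤ (1 + 1/R) ^ p * |x| ^ p := by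
        rw [← Real.mul_rpow hco (abs_nonneg x)]
        exact Real.rpow_le_rpow (abs_nonneg _) hb1 hp0.le
      have hr2 : |1 - x| ^ p ≤ (1 + 1/R) ^ p * |x| ^ p := by
        rw [← Real.mul_rpow hco (abs_nonneg x)]
        exact Real.rpow_le_rpow (abs_nonneg _) hb2 hp0.le
      have hcp : (0:ℝ) ≤ (1 + 1/R) ^ p := Real.rpow_nonneg hco p
      rw [hf]
      simp only []
      rw [div_le_iff₀ (den_pos p x)]
      nlinarith [hr1, hr2, hcp]
    have hB : 2 * (1 + 1/R) ^ p < 2 ^ (p-1) := by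
      have h1R : 1/R ≤ c/2 := by
        have h2c : (0:ℝ) < 2/c := by positivity
        have := one_div_le_one_div_of_le h2c (le_max_right (1+ε) (2/c))
        calc (1:ℝ)/R ≤ 1/(2/c) := this
        _ = c/2 := by field_simp
      have hlt : 1 + 1/R < 2 ^ ((p-2)/p) := by
        have hc' := hc
        rw [hcdef] at h1R hc'
        linarith
      have h2 : (1 + 1/R) ^ p < (2 ^ ((p-2)/p)) ^ p :=
        Real.rpow_lt_rpow (by linarith) hlt hp0
      have h3 : ((2:ℝ) ^ ((p-2)/p)) ^ p = 2 ^ (p-2) := by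
        rw [← Real.rpow_mul (by norm_num : (0:ℝ) ≤ 2), div_mul_cancel₀ _ hp0.ne']
      have h4 : (2:ℝ) ^ (p-1) = 2 ^ (p-2) * 2 := by
        rw [show p - 1 = (p-2) + 1 by ring, Real.rpow_add two_pos, Real.rpow_one]
      rw [h4]
      rw [h3] at h2
      linarith
    -- compact set
    set K : Set ℝ := Icc (-R) R ∩ {x : ℝ | |x| ≤ 1 - ε ∨ 1 + ε ≤ |x|} with hKdef
    have hclosed : IsClosed {x : ℝ | |x| ≤ 1 - ε ∨ 1 + ε ≤ |x|} := by
      have heq : {x : ℝ | |x| ≤ 1 - ε ∨ 1 + ε ≤ |x|}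
          = abs ⁻¹' (Iic (1-ε) ∪ Ici (1+ε)) := by
        ext y
        simp [Set.mem_preimage, Set.mem_Iic, Set.mem_Ici]
      rw [heq]
      exact (isClosed_Iic.union isClosed_Ici).preimage continuous_abs
    have hKc : IsCompact K := isCompact_Icc.inter_right hclosed
    have hKne : K.Nonempty := by
      refine ⟨1 + ε, ⟨⟨by linarith, hR1⟩, Or.inr (le_abs_self _)⟩⟩
    obtain ⟨x₀, hx₀K, hmax⟩ := hKc.exists_isMaxOn hKne hcont.continuousOn
    have hx₀ : f x₀ < 2 ^ (p-1) := by
      have hne : x₀ ^ 2 ≠ 1 := by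
        intro habs
        have h1 : |x₀| = 1 := by
          nlinarith [sq_abs x₀, abs_nonneg x₀]
        rcases hx₀K.2 with h | h <;> linarith
      rw [hf]
      simp only []
      rw [div_lt_iff₀ (den_pos p x₀)]
      exact key_strict p hp x₀ hne
    refine ⟨min (2^(p-1) - f x₀) (2^(p-1) - 2*(1+1/R)^p),
      lt_min (by linarith) (by linarith), ?_⟩
    intro x hx
    simp only [Set.mem_Icc, not_and, not_le] at hx
    rcases le_or_gt |x| R with hle | hgt
    · have hxK : x ∈ K := by
        refine ⟨⟨(abs_le.mp hle).1, (abs_le.mp hle).2⟩, ?_⟩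
        rcases le_or_gt (1-ε) |x| with h1 | h1
        · exact Or.inr (hx h1).le
        · exact Or.inl h1.le
      have h := hmax hxK
      have hmin := min_le_left (2^(p-1) - f x₀) (2^(p-1) - 2*(1+1/R)^p)
      calc f x ≤ f x₀ := h
      _ ≤ _ := by linarith
    · have h := htail x hgt
      have hmin := min_le_right (2^(p-1) - f x₀) (2^(p-1) - 2*(1+1/R)^p)
      calc f x ≤ 2*(1+1/R)^p := h
      _ ≤ _ := by linarith
end

section
/- Let p > 2. For every ε > 0 there exists a constant C > 0 such that, defining f(x,y) = (|x−y|^p + C(|1+x|^p + |1−x|^p + |1+y|^p + |1−y|^p)) / (2 + |x|^p + |y|^p) for x, y ∈ ℝ, the following holds: if the pair (x,y) is good — i.e., both |x| and |y| lie in the open interval (1−ε, 1+ε) and xy < 0 — then f(x,y) ≤ C·2^{p-1} + (1+ε)·2^p/(2 + |x|^p + |y|^p); otherwise f(x,y) ≤ C·2^{p-1}. -/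
/-! Write `α = |1 - |x||` and `β = |1 - |y||`. For `0 ≤ b ≤ a` and `p ≥ 2` one has
`2 a^p + 2^(p-1) b^p ≤ (a + b)^p + (a - b)^p`, both sides being equal at `b = 0` and the
derivative in `b` of the right side minus `2^(p-1) b^p` being nonnegative; applied to
`a = 1 + |x|`, `b = α` it gives `|1+x|^p + |1-x|^p + (2^(p-2) - 1) α^p ≤ 2^(p-1) (1 + |x|^p)`.
Hence `f(x,y) ≤ C 2^(p-1) + R / (2 + |x|^p + |y|^p)` as soon as
`|x - y|^p ≤ C (2^(p-2) - 1) (α^p + β^p) + R`, and `2^(p-2) - 1 > 0` because `p > 2`.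
Since `|x - y| ≤ 2 + α + β`, convexity of `t ↦ t^p` with weights close to `(1, 0)` gives
`|x - y|^p ≤ (1 + ε) 2^p + L (α^p + β^p)` for all `x, y`, which settles good pairs.
A pair that is not good has either `xy ≥ 0`, so that `|x - y| ≤ α + β`, or `max α β ≥ ε`,
so that the constant `(1 + ε) 2^p` is absorbed into a multiple of `α^p + β^p`. -/

open Real Set

lemma add_rpow_le_two_rpow_mul_add_rpow {p a b : ℝ} (hp : 1 ≤ p) (ha : 0 ≤ a) (hb : 0 ≤ b) :
    (a + b) ^ p ≤ 2 ^ (p - 1) * (a ^ p + b ^ p) := by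
  lift a to NNReal using ha
  lift b to NNReal using hb
  exact_mod_cast NNReal.rpow_add_le_mul_rpow_add_rpow a b hp

lemma add_rpow_le_div_rpow_add_div_rpow {p θ u v : ℝ} (hp : 1 ≤ p) (hθ₀ : 0 < θ)
    (hθ₁ : θ < 1) (hu : 0 ≤ u) (hv : 0 ≤ v) :
    (u + v) ^ p ≤ u ^ p / (1 - θ) ^ (p - 1) + v ^ p / θ ^ (p - 1) := by
  have h₁θ : 0 < 1 - θ := by linarith
  have hconv := (convexOn_rpow hp).2 (x := u / (1 - θ)) (y := v / θ) (by simp; positivity)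
    (by simp; positivity) h₁θ.le hθ₀.le (by ring)
  have hsum : (1 - θ) • (u / (1 - θ)) + θ • (v / θ) = u + v := by
    simp only [smul_eq_mul]; field_simp
  have hscale : ∀ {c w : ℝ}, 0 < c → 0 ≤ w → c • (w / c) ^ p = w ^ p / c ^ (p - 1) := by
    intro c w hc hw
    rw [smul_eq_mul, div_rpow hw hc.le, rpow_sub hc, rpow_one]
    field_simp
  rwa [hsum, hscale h₁θ hu, hscale hθ₀ hv] at hconv

lemma exists_add_rpow_le {p ε : ℝ} (hp : 1 ≤ p) (hε : 0 < ε) :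
    ∃ K, 0 ≤ K ∧ ∀ u v : ℝ, 0 ≤ u → 0 ≤ v →
      (u + v) ^ p ≤ (1 + ε) * u ^ p + K * v ^ p := by
  -- Bernoulli: `(1 - θ) ^ (p - 1) ≥ (1 - θ) ^ p ≥ 1 - p θ = 1 / (1 + ε)`
  set θ := ε / (p * (1 + ε))
  have hθ₀ : 0 < θ := by positivity
  have hpθ : p * θ = ε / (1 + ε) := by simp only [θ]; field_simp
  have hθ₁ : θ < 1 := by rw [div_lt_one (by positivity)]; nlinarith
  have hbernoulli : 1 ≤ (1 + ε) * (1 - θ) ^ (p - 1) := by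
    have h := one_add_mul_self_le_rpow_one_add (s := -θ) (by linarith) hp
    rw [mul_neg, hpθ, ← sub_eq_add_neg, ← sub_eq_add_neg] at h
    calc 1 = (1 + ε) * (1 - ε / (1 + ε)) := by field_simp; ring
      _ ≤ (1 + ε) * (1 - θ) ^ p := by gcongr
      _ ≤ (1 + ε) * (1 - θ) ^ (p - 1) := mul_le_mul_of_nonneg_left
        (rpow_le_rpow_of_exponent_ge (by linarith) (by linarith) (by linarith)) (by positivity)
  refine ⟨1 / θ ^ (p - 1), by positivity, fun u v hu hv => ?_⟩
  calc (u + v) ^ p ≤ u ^ p / (1 - θ) ^ (p - 1) + v ^ p / θ ^ (p - 1) :=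
        add_rpow_le_div_rpow_add_div_rpow hp hθ₀ hθ₁ hu hv
    _ ≤ (1 + ε) * u ^ p + 1 / θ ^ (p - 1) * v ^ p := by
      rw [one_div_mul_eq_div]
      gcongr
      rw [div_le_iff₀ (rpow_pos_of_pos (by linarith) _)]
      nlinarith [rpow_nonneg hu p]

lemma two_mul_rpow_add_le_add_rpow_add_sub_rpow {p a b : ℝ} (hp : 2 ≤ p) (hb : 0 ≤ b)
    (hba : b ≤ a) : 2 * a ^ p + 2 ^ (p - 1) * b ^ p ≤ (a + b) ^ p + (a - b) ^ p := by
  have hp₁ : 1 ≤ p := by linarith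
  let F : ℝ → ℝ := fun s => (a + s) ^ p + (a - s) ^ p - 2 ^ (p - 1) * s ^ p
  have hF : ∀ s, HasDerivAt F
      (p * ((a + s) ^ (p - 1) - (a - s) ^ (p - 1) - 2 ^ (p - 1) * s ^ (p - 1))) s := by
    intro s
    have h₁ := ((hasDerivAt_id s).const_add a).rpow_const (p := p) (Or.inr hp₁)
    have h₂ := ((hasDerivAt_id s).const_sub a).rpow_const (p := p) (Or.inr hp₁)
    have h₃ := ((hasDerivAt_id s).rpow_const (p := p) (Or.inr hp₁)).const_mul (2 ^ (p - 1))
    exact ((h₁.add h₂).sub h₃).congr_deriv (by simp only [id]; ring)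
  have hmono : MonotoneOn F (Icc 0 a) := by
    refine monotoneOn_of_hasDerivWithinAt_nonneg (convex_Icc 0 a)
      (fun s _ => (hF s).continuousAt.continuousWithinAt) (fun s _ => (hF s).hasDerivWithinAt) ?_
    intro s hs
    rw [interior_Icc] at hs
    obtain ⟨hs₀, hsa⟩ := hs
    -- superadditivity of `r ↦ r ^ (p - 1)` at `2 s` and `a - s`
    have hsuper := add_rpow_le_rpow_add (by linarith : 0 ≤ 2 * s) (by linarith : 0 ≤ a - s)
      (by linarith : 1 ≤ p - 1)
    rw [mul_rpow zero_le_two hs₀.le, show 2 * s + (a - s) = a + s by ring] at hsuper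
    have : 0 ≤ p := by linarith
    nlinarith
  have h := hmono ⟨le_rfl, hb.trans hba⟩ ⟨hb, hba⟩ hb
  simp only [F, add_zero, sub_zero, zero_rpow (by linarith : p ≠ 0), mul_zero] at h
  linarith

lemma abs_one_add_rpow_add_abs_one_sub_rpow (p x : ℝ) :
    |1 + x| ^ p + |1 - x| ^ p = (1 + |x|) ^ p + |(1 - |x|)| ^ p := by
  rcases le_total 0 x with hx | hx
  · rw [abs_of_nonneg hx, abs_of_nonneg (by linarith : 0 ≤ 1 + x)]
  · rw [abs_of_nonpos hx, abs_of_nonneg (by linarith : 0 ≤ 1 - x), sub_neg_eq_add,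
      ← sub_eq_add_neg, add_comm]

lemma abs_one_add_rpow_add_abs_one_sub_rpow_add_le {p : ℝ} (hp : 2 ≤ p) (x : ℝ) :
    |1 + x| ^ p + |1 - x| ^ p + (2 ^ (p - 2) - 1) * |(1 - |x|)| ^ p ≤
      2 ^ (p - 1) * (1 + |x| ^ p) := by
  have hx := abs_nonneg x
  have h := two_mul_rpow_add_le_add_rpow_add_sub_rpow (a := 1 + |x|) hp (abs_nonneg (1 - |x|))
    (abs_le.2 ⟨by linarith, by linarith⟩)
  have hsum : (1 + |x| + |(1 - |x|)|) ^ p + (1 + |x| - |(1 - |x|)|) ^ p =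
      2 ^ p * (1 + |x| ^ p) := by
    rcases le_total |x| 1 with hx₁ | hx₁
    · rw [abs_of_nonneg (by linarith : 0 ≤ 1 - |x|), show 1 + |x| + (1 - |x|) = 2 by ring,
        show 1 + |x| - (1 - |x|) = 2 * |x| by ring, mul_rpow zero_le_two hx]
      ring
    · rw [abs_of_nonpos (by linarith : 1 - |x| ≤ 0), show 1 + |x| + -(1 - |x|) = 2 * |x| by ring,
        show 1 + |x| - -(1 - |x|) = 2 by ring, mul_rpow zero_le_two hx]
      ring
  have h₂ : (2 : ℝ) ^ p = 2 * 2 ^ (p - 1) := by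
    rw [← rpow_one_add' zero_le_two (by linarith)]; ring_nf
  have h₁ : (2 : ℝ) ^ (p - 1) = 2 * 2 ^ (p - 2) := by
    rw [← rpow_one_add' zero_le_two (by linarith)]; ring_nf
  rw [hsum, h₂, h₁] at h
  rw [abs_one_add_rpow_add_abs_one_sub_rpow, h₁]
  linarith

lemma abs_sub_le_of_mul_nonneg {x y : ℝ} (h : 0 ≤ x * y) :
    |x - y| ≤ |(1 - |x|)| + |(1 - |y|)| := by
  have hsq : (x - y) ^ 2 ≤ (|x| - |y|) ^ 2 := by
    nlinarith [sq_abs x, sq_abs y, abs_mul x y, abs_of_nonneg h]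
  calc |x - y| ≤ |(|x| - |y|)| := sq_le_sq.1 hsq
    _ ≤ |(|x| - 1)| + |(1 - |y|)| := abs_sub_le _ _ _
    _ = |(1 - |x|)| + |(1 - |y|)| := by rw [abs_sub_comm]

lemma abs_sub_le_two_add (x y : ℝ) : |x - y| ≤ 2 + (|(1 - |x|)| + |(1 - |y|)|) := by
  linarith [abs_sub x y, neg_abs_le (1 - |x|), neg_abs_le (1 - |y|)]

lemma le_abs_one_sub_of_notMem_Ioo {ε r : ℝ} (h : r ∉ Ioo (1 - ε) (1 + ε)) :
    ε ≤ |1 - r| := by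
  by_contra! h'
  obtain ⟨h₁, h₂⟩ := abs_lt.1 h'
  exact h ⟨by linarith, by linarith⟩

lemma div_le_of_abs_sub_rpow_le {p C R x y : ℝ} (hp : 2 ≤ p) (hC : 0 ≤ C)
    (h : |x - y| ^ p ≤ C * (2 ^ (p - 2) - 1) * (|(1 - |x|)| ^ p + |(1 - |y|)| ^ p) + R) :
    (|x - y| ^ p + C * (|1 + x| ^ p + |1 - x| ^ p + |1 + y| ^ p + |1 - y| ^ p)) /
        (2 + |x| ^ p + |y| ^ p) ≤ C * 2 ^ (p - 1) + R / (2 + |x| ^ p + |y| ^ p) := by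
  have hden : 0 < 2 + |x| ^ p + |y| ^ p := by positivity
  have hx := mul_le_mul_of_nonneg_left (abs_one_add_rpow_add_abs_one_sub_rpow_add_le hp x) hC
  have hy := mul_le_mul_of_nonneg_left (abs_one_add_rpow_add_abs_one_sub_rpow_add_le hp y) hC
  rw [div_le_iff₀ hden, add_mul, div_mul_cancel₀ _ hden.ne']
  linarith

lemma exists_abs_sub_rpow_le {p ε : ℝ} (hp : 1 ≤ p) (hε : 0 < ε) :
    ∃ L, 0 ≤ L ∧ ∀ x y : ℝ,
      |x - y| ^ p ≤ (1 + ε) * 2 ^ p + L * (|(1 - |x|)| ^ p + |(1 - |y|)| ^ p) := by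
  obtain ⟨K, hK₀, hK⟩ := exists_add_rpow_le hp hε
  refine ⟨K * 2 ^ (p - 1), by positivity, fun x y => ?_⟩
  calc |x - y| ^ p ≤ (2 + (|(1 - |x|)| + |(1 - |y|)|)) ^ p :=
        rpow_le_rpow (abs_nonneg _) (abs_sub_le_two_add x y) (by linarith)
    _ ≤ (1 + ε) * 2 ^ p + K * (|(1 - |x|)| + |(1 - |y|)|) ^ p :=
        hK _ _ zero_le_two (by positivity)
    _ ≤ (1 + ε) * 2 ^ p + K * (2 ^ (p - 1) * (|(1 - |x|)| ^ p + |(1 - |y|)| ^ p)) := by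
        gcongr
        exact add_rpow_le_two_rpow_mul_add_rpow hp (abs_nonneg _) (abs_nonneg _)
    _ = (1 + ε) * 2 ^ p + K * 2 ^ (p - 1) * (|(1 - |x|)| ^ p + |(1 - |y|)| ^ p) := by ring

lemma rpow_le_abs_one_sub_rpow_add_of_notMem {p ε x y : ℝ} (hp : 0 ≤ p) (hε : 0 ≤ ε)
    (h : |x| ∉ Ioo (1 - ε) (1 + ε) ∨ |y| ∉ Ioo (1 - ε) (1 + ε)) :
    ε ^ p ≤ |(1 - |x|)| ^ p + |(1 - |y|)| ^ p := by
  have hx := rpow_nonneg (abs_nonneg (1 - |x|)) p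
  have hy := rpow_nonneg (abs_nonneg (1 - |y|)) p
  rcases h with h | h
  · linarith [rpow_le_rpow hε (le_abs_one_sub_of_notMem_Ioo h) hp]
  · linarith [rpow_le_rpow hε (le_abs_one_sub_of_notMem_Ioo h) hp]

lemma exists_abs_sub_rpow_le_mul {p ε : ℝ} (hp : 1 ≤ p) (hε : 0 < ε) :
    ∃ M, 0 < M ∧ ∀ x y : ℝ,
      |x - y| ^ p ≤ M * (|(1 - |x|)| ^ p + |(1 - |y|)| ^ p) + (1 + ε) * 2 ^ p ∧
      (|x| ∉ Ioo (1 - ε) (1 + ε) ∨ |y| ∉ Ioo (1 - ε) (1 + ε) ∨ 0 ≤ x * y →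
        |x - y| ^ p ≤ M * (|(1 - |x|)| ^ p + |(1 - |y|)| ^ p)) := by
  obtain ⟨L, hL₀, hL⟩ := exists_abs_sub_rpow_le hp hε
  have hεp : 0 < ε ^ p := rpow_pos_of_pos hε p
  refine ⟨L + (1 + ε) * 2 ^ p / ε ^ p + 2 ^ (p - 1), by positivity, fun x y => ?_⟩
  set S := |(1 - |x|)| ^ p + |(1 - |y|)| ^ p
  have hS : 0 ≤ S := by positivity
  have hLS : |x - y| ^ p ≤ (1 + ε) * 2 ^ p + L * S := hL x y
  have hM : (L + (1 + ε) * 2 ^ p / ε ^ p + 2 ^ (p - 1)) * S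
      = L * S + (1 + ε) * 2 ^ p / ε ^ p * S + 2 ^ (p - 1) * S := by ring
  have hS₁ : 0 ≤ (1 + ε) * 2 ^ p / ε ^ p * S := by positivity
  have hS₂ : 0 ≤ 2 ^ (p - 1) * S := by positivity
  refine ⟨by linarith, fun h => ?_⟩
  rcases lt_or_ge (x * y) 0 with hxy | hxy
  · have hεS : ε ^ p ≤ S :=
      rpow_le_abs_one_sub_rpow_add_of_notMem (by linarith) hε.le (by simpa [hxy.not_ge] using h)
    have hconst : (1 + ε) * 2 ^ p ≤ (1 + ε) * 2 ^ p / ε ^ p * S := by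
      rw [div_mul_eq_mul_div, le_div_iff₀ hεp]
      exact mul_le_mul_of_nonneg_left hεS (by positivity)
    linarith
  · have hsame : |x - y| ^ p ≤ 2 ^ (p - 1) * S :=
      (rpow_le_rpow (abs_nonneg _) (abs_sub_le_of_mul_nonneg hxy) (by linarith)).trans
        (add_rpow_le_two_rpow_mul_add_rpow hp (abs_nonneg _) (abs_nonneg _))
    have : 0 ≤ L * S := by positivity
    linarith

/-- for `p > 2` and any `ε > 0` there is a constant `C > 0` such that for
`f(x,y) = (|x−y|^p + C(|1+x|^p + |1−x|^p + |1+y|^p + |1−y|^p)) / (2 + |x|^p + |y|^p)`: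
if `(x,y)` is good (`|x|, |y| ∈ (1−ε, 1+ε)` and `xy < 0`) then
`f(x,y) ≤ C·2^{p-1} + (1+ε)·2^p/(2 + |x|^p + |y|^p)`, and otherwise `f(x,y) ≤ C·2^{p-1}`. -/
theorem stmt14 (p : ℝ) (hp : 2 < p) (ε : ℝ) (hε : 0 < ε) :
    ∃ C : ℝ, 0 < C ∧ ∀ x y : ℝ,
      ((|x| ∈ Set.Ioo (1 - ε) (1 + ε) ∧ |y| ∈ Set.Ioo (1 - ε) (1 + ε) ∧ x * y < 0) →
        (|x - y| ^ p + C * (|1 + x| ^ p + |1 - x| ^ p + |1 + y| ^ p + |1 - y| ^ p)) /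
            (2 + |x| ^ p + |y| ^ p) ≤
          C * 2 ^ (p - 1) + (1 + ε) * 2 ^ p / (2 + |x| ^ p + |y| ^ p)) ∧
      (¬(|x| ∈ Set.Ioo (1 - ε) (1 + ε) ∧ |y| ∈ Set.Ioo (1 - ε) (1 + ε) ∧ x * y < 0) →
        (|x - y| ^ p + C * (|1 + x| ^ p + |1 - x| ^ p + |1 + y| ^ p + |1 - y| ^ p)) /
            (2 + |x| ^ p + |y| ^ p) ≤ C * 2 ^ (p - 1)) := by
  obtain ⟨M, hM₀, hM⟩ := exists_abs_sub_rpow_le_mul (by linarith : 1 ≤ p) hε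
  have hκ : 0 < (2 : ℝ) ^ (p - 2) - 1 := sub_pos.2 (one_lt_rpow one_lt_two (by linarith))
  have hCκ : M / (2 ^ (p - 2) - 1) * (2 ^ (p - 2) - 1) = M := div_mul_cancel₀ _ hκ.ne'
  refine ⟨M / (2 ^ (p - 2) - 1), by positivity, fun x y => ⟨fun _ => ?_, fun hbad => ?_⟩⟩
  · exact div_le_of_abs_sub_rpow_le hp.le (by positivity) (by rw [hCκ]; exact (hM x y).1)
  · have h := (hM x y).2 (by simpa only [not_and_or, not_lt] using hbad)
    simpa using div_le_of_abs_sub_rpow_le (R := 0) hp.le (by positivity) (by rwa [hCκ, add_zero])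
end

section
/- Let G be a d-regular graph on n vertices, and let 1/2 ≤ ρ < 1 be such that every cut of G contains at most ρ·nd/2 edges. Then for every subset S of the vertices and every partition of S into two parts, the number of edges of G with both endpoints in S whose endpoints lie in different parts of the partition is at most ρ·(|S|+n)·d/4. -/
/-- The number of edges of `G` that cross from `T` to its complement (inside all of `V`). -/
noncomputable def cutSize {V : Type*} (G : SimpleGraph V) (T : Set V) : ℕ :=
  {e ∈ G.edgeSet | ∃ a b, e = s(a, b) ∧ a ∈ T ∧ b ∉ T}.ncard

/-- The number of edges of `G` with both endpoints in `S` that cross the partition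
of `S` given by `T ⊆ S` (i.e. one endpoint in `T`, the other in `S \ T`). -/
noncomputable def cutSizeIn {V : Type*} (G : SimpleGraph V) (S T : Set V) : ℕ :=
  {e ∈ G.edgeSet | ∃ a b, e = s(a, b) ∧ a ∈ S ∧ b ∈ S ∧ a ∈ T ∧ b ∉ T}.ncard

/-!
Write `A = T`, `B = S \ T`, `C = Sᶜ` and split `C = P ∪ Q` greedily so that at least half of
the edges inside `C` cross between `P` and `Q`. The two cuts `A ∪ P` and `A ∪ Q` together
contain every `A`–`B` edge and every `P`–`Q` edge twice and every `S`–`C` edge once. Since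
`d|C| = 2e(C) + e(C, S)`, comparing their sum with `ρnd` gives
`2e(A, B) ≤ ρnd - d|C| + e(C) ≤ ρnd - d|C|/2 ≤ ρ(n + |S|)d/2`, using `|C| = n - |S|` and `ρ ≤ 1`.
-/

open Finset

namespace SimpleGraph

variable {V : Type*} (G : SimpleGraph V) [DecidableRel G.Adj]

theorem card_interedges_comm (s t : Finset V) :
    #(G.interedges s t) = #(G.interedges t s) :=
  have : Std.Symm G.Adj := ⟨fun _ _ h => h.symm⟩
  Rel.card_interedges_comm s t

theorem ncard_edges_between_eq_card_interedges {X Y : Finset V} (h : Disjoint X Y) :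
    {e ∈ G.edgeSet | ∃ a b, e = s(a, b) ∧ a ∈ X ∧ b ∈ Y}.ncard = #(G.interedges X Y) := by
  have himage : {e ∈ G.edgeSet | ∃ a b, e = s(a, b) ∧ a ∈ X ∧ b ∈ Y} =
      (fun p : V × V => s(p.1, p.2)) '' (G.interedges X Y : Set (V × V)) := by
    ext e
    constructor
    · rintro ⟨he, a, b, rfl, ha, hb⟩
      exact ⟨(a, b), G.mk_mem_interedges_iff.2 ⟨ha, hb, he⟩, rfl⟩
    · rintro ⟨⟨a, b⟩, hab, rfl⟩
      obtain ⟨ha, hb, hadj⟩ := G.mk_mem_interedges_iff.1 hab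
      exact ⟨hadj, a, b, rfl, ha, hb⟩
  rw [himage, Set.InjOn.ncard_image, Set.ncard_coe_finset]
  rintro ⟨a, b⟩ hab ⟨a', b'⟩ hab' heq
  rw [mem_coe, mk_mem_interedges_iff] at hab hab'
  rcases Sym2.eq_iff.1 heq with ⟨rfl, rfl⟩ | ⟨rfl, rfl⟩
  · rfl
  · exact absurd hab'.2.1 (Finset.disjoint_left.1 h hab.1)

variable [DecidableEq V]

theorem card_interedges_union_left {s₁ s₂ : Finset V} (h : Disjoint s₁ s₂) (t : Finset V) :
    #(G.interedges (s₁ ∪ s₂) t) = #(G.interedges s₁ t) + #(G.interedges s₂ t) := by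
  rw [interedges_def, union_product, filter_union]
  exact card_union_of_disjoint (G.interedges_disjoint_left h t)

theorem card_interedges_union_right (s : Finset V) {t₁ t₂ : Finset V} (h : Disjoint t₁ t₂) :
    #(G.interedges s (t₁ ∪ t₂)) = #(G.interedges s t₁) + #(G.interedges s t₂) := by
  simp only [G.card_interedges_comm s, G.card_interedges_union_left h]

theorem card_interedges_union_union {s₁ s₂ t₁ t₂ : Finset V} (hs : Disjoint s₁ s₂)
    (ht : Disjoint t₁ t₂) :
    #(G.interedges (s₁ ∪ s₂) (t₁ ∪ t₂)) = #(G.interedges s₁ t₁) + #(G.interedges s₁ t₂) +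
      (#(G.interedges s₂ t₁) + #(G.interedges s₂ t₂)) := by
  rw [G.card_interedges_union_left hs, G.card_interedges_union_right _ ht,
    G.card_interedges_union_right _ ht]

theorem card_interedges_insert_self {a : V} {s : Finset V} (ha : a ∉ s) :
    #(G.interedges (insert a s) (insert a s)) =
      #(G.interedges s s) + 2 * #(G.interedges {a} s) := by
  have hloop : G.interedges {a} {a} = ∅ := by
    ext ⟨x, y⟩
    simp +contextual [mk_mem_interedges_iff]
  rw [insert_eq, G.card_interedges_union_union (disjoint_singleton_left.2 ha)
    (disjoint_singleton_left.2 ha), hloop, G.card_interedges_comm s {a}, card_empty]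
  ring

variable {G} in
theorem IsRegularOfDegree.card_interedges_add_card_interedges_compl [Fintype V] {d : ℕ}
    (hG : G.IsRegularOfDegree d) (s : Finset V) :
    #(G.interedges s s) + #(G.interedges s sᶜ) = d * #s := by
  rw [← G.card_interedges_union_right s disjoint_compl_right, union_compl, interedges_def,
    card_filter, sum_product, sum_const_nat fun v _ => ?_, mul_comm]
  rw [← card_filter, ← hG v, ← card_neighborFinset_eq_degree]
  congr 1; ext; simp

/-- Interedges are ordered pairs, so the left-hand side counts each edge inside `C` twice: some
cut of `G[C]` contains at least half of its edges. -/
theorem exists_card_interedges_le_four_mul_card_interedges_sdiff (C : Finset V) :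
    ∃ P ⊆ C, #(G.interedges C C) ≤ 4 * #(G.interedges P (C \ P)) := by
  induction C using Finset.induction_on with
  | empty => exact ⟨∅, empty_subset _, by simp [interedges_def]⟩
  | insert a C ha ih =>
    obtain ⟨P, hPC, hP⟩ := ih
    wlog hle : #(G.interedges {a} P) ≤ #(G.interedges {a} (C \ P)) generalizing P with H
    · refine H (C \ P) sdiff_subset ?_ ?_
      · rwa [Finset.sdiff_sdiff_eq_self hPC, G.card_interedges_comm (C \ P)]
      · rw [Finset.sdiff_sdiff_eq_self hPC]; omega
    have haP : a ∉ P := fun h => ha (hPC h)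
    refine ⟨insert a P, insert_subset_insert a hPC, ?_⟩
    have hsplit := G.card_interedges_union_right {a} (disjoint_sdiff (s := P) (t := C))
    rw [union_sdiff_of_subset hPC] at hsplit
    rw [G.card_interedges_insert_self ha, insert_sdiff_insert, sdiff_insert_of_notMem ha,
      insert_eq, G.card_interedges_union_left (disjoint_singleton_left.2 haP)]
    omega

end SimpleGraph

theorem Finset.compl_union_eq_sdiff_union_sdiff {V : Type*} [Fintype V] [DecidableEq V]
    {S A P : Finset V} (hA : A ⊆ S) (hP : P ⊆ Sᶜ) : (A ∪ P)ᶜ = (S \ A) ∪ (Sᶜ \ P) := by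
  ext x
  have := @hA x
  have := @hP x
  simp only [mem_compl, mem_union, mem_sdiff] at *
  tauto

section Cuts

variable {V : Type*} [DecidableEq V] (G : SimpleGraph V) [DecidableRel G.Adj]

theorem cutSizeIn_coe {S T : Finset V} (hTS : T ⊆ S) :
    cutSizeIn G S T = #(G.interedges T (S \ T)) := by
  rw [cutSizeIn, ← G.ncard_edges_between_eq_card_interedges disjoint_sdiff]
  congr! 3 with e
  refine and_congr_right fun _ => exists_congr fun a => exists_congr fun b => ?_
  simp only [mem_coe, mem_sdiff]
  have := @hTS a
  tauto

variable [Fintype V]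

theorem cutSize_coe (T : Finset V) : cutSize G T = #(G.interedges T Tᶜ) := by
  rw [cutSize, ← G.ncard_edges_between_eq_card_interedges disjoint_compl_right]
  simp only [mem_coe, mem_compl]

theorem SimpleGraph.card_interedges_cut_add_cut {S A P : Finset V} (hA : A ⊆ S) (hP : P ⊆ Sᶜ) :
    #(G.interedges (A ∪ P) (A ∪ P)ᶜ) + #(G.interedges (A ∪ (Sᶜ \ P)) (A ∪ (Sᶜ \ P))ᶜ) =
      2 * #(G.interedges A (S \ A)) + #(G.interedges Sᶜ S) + 2 * #(G.interedges P (Sᶜ \ P)) := by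
  have hdisj : ∀ {X Y}, X ⊆ S → Y ⊆ Sᶜ → Disjoint X Y := fun hX hY =>
    (disjoint_compl_right (a := S)).mono hX hY
  have hQ : Sᶜ \ P ⊆ Sᶜ := sdiff_subset
  rw [compl_union_eq_sdiff_union_sdiff hA hP, compl_union_eq_sdiff_union_sdiff hA hQ,
    Finset.sdiff_sdiff_eq_self hP,
    G.card_interedges_union_union (hdisj hA hP) (hdisj sdiff_subset hQ),
    G.card_interedges_union_union (hdisj hA hQ) (hdisj sdiff_subset hP)]
  have hA_split := G.card_interedges_union_right A (disjoint_sdiff (s := P) (t := Sᶜ))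
  have hB_split := G.card_interedges_union_left (disjoint_sdiff (s := P) (t := Sᶜ)) (S \ A)
  have hS_split := G.card_interedges_union_right Sᶜ (disjoint_sdiff (s := A) (t := S))
  rw [union_sdiff_of_subset hP] at hA_split hB_split
  rw [union_sdiff_of_subset hA] at hS_split
  rw [G.card_interedges_comm A Sᶜ] at hA_split
  rw [G.card_interedges_comm (Sᶜ \ P) P]
  omega

end Cuts

theorem stmt15_general (n d : ℕ) (V : Type*) [Fintype V]
    (hcard : Fintype.card V = n)
    (G : SimpleGraph V) [DecidableRel G.Adj] (hreg : G.IsRegularOfDegree d)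
    (ρ : ℝ) (hρ2 : ρ < 1)
    (hcut : ∀ T : Set V, (cutSize G T : ℝ) ≤ ρ * n * d / 2) :
    ∀ S T : Set V, T ⊆ S →
      (cutSizeIn G S T : ℝ) ≤ ρ * ((S.ncard : ℝ) + n) * d / 4 := by
  classical
  intro S T hTS
  lift S to Finset V using S.toFinite
  lift T to Finset V using T.toFinite
  rw [coe_subset] at hTS
  obtain ⟨P, hP, hmaxcut⟩ := G.exists_card_interedges_le_four_mul_card_interedges_sdiff Sᶜ
  have hdeg := hreg.card_interedges_add_card_interedges_compl Sᶜ
  rw [compl_compl] at hdeg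
  have hsum := G.card_interedges_cut_add_cut hTS hP
  have hcut₁ := hcut ↑(T ∪ P)
  have hcut₂ := hcut ↑(T ∪ (Sᶜ \ P))
  rw [cutSize_coe] at hcut₁ hcut₂
  have hn : (#S : ℝ) + #Sᶜ = n := by exact_mod_cast (card_add_card_compl S).trans hcard
  rw [cutSizeIn_coe G hTS, Set.ncard_coe_finset]
  rw [← hn] at hcut₁ hcut₂ ⊢
  have hslack : 0 ≤ (1 - ρ) * (#Sᶜ * d) := mul_nonneg (by linarith) (by positivity)
  have hsumR : (_ : ℝ) = _ := congrArg (Nat.cast (R := ℝ)) hsum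
  have hdegR : (_ : ℝ) = _ := congrArg (Nat.cast (R := ℝ)) hdeg
  have hmaxcutR : (_ : ℝ) ≤ _ := Nat.cast_le.2 hmaxcut
  push_cast at hsumR hdegR hmaxcutR
  nlinarith

/-- if every cut of a `d`-regular graph `G` on `n` vertices has at most
`ρ·nd/2` edges (`1/2 ≤ ρ < 1`), then for every vertex subset `S` and every partition of
`S` into two parts, the number of edges of `G` inside `S` crossing the partition is at
most `ρ·(|S|+n)·d/4`. -/
theorem stmt15 (n d : ℕ) (V : Type*) [Fintype V] [DecidableEq V]
    (hcard : Fintype.card V = n)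
    (G : SimpleGraph V) [DecidableRel G.Adj] (hreg : G.IsRegularOfDegree d)
    (ρ : ℝ) (hρ1 : 1 / 2 ≤ ρ) (hρ2 : ρ < 1)
    (hcut : ∀ T : Set V, (cutSize G T : ℝ) ≤ ρ * n * d / 2) :
    ∀ S T : Set V, T ⊆ S →
      (cutSizeIn G S T : ℝ) ≤ ρ * ((S.ncard : ℝ) + n) * d / 4 :=
  stmt15_general n d V hcard G hreg ρ hρ2 hcut
end
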